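/- Let N ≥ 2. The equivalence relation S_N is ergodic with respect to Lebesgue measure: every Borel set X ⊆ [0,1] that is S_N-saturated satisfies λ(X) = 0 or λ(X) = 1. -/

import Mathlib

/-- A real number is an `N`-adic rational if it equals `k / N^m` for some `k : ℤ`, `m : ℕ`. -/
def IsNAdic (N : ℕ) (x : ℝ) : Prop :=
  ∃ (k : ℤ) (m : ℕ), x = (k : ℝ) / (N : ℝ) ^ m

/-- Membership (as a map of `[0,1]`) in the generalized Thompson group `F(N)`:
`f 0 = 0`, `f 1 = 1`, and there is a finite partition `0 = a 0 < a 1 < ⋯ < a n = 1`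
of `[0,1]` by `N`-adic rationals such that on each piece `[a i, a (i+1)]` the map `f`
is affine with slope an integer power of `N`.  (Such an `f` is automatically an
increasing piecewise-linear homeomorphism of `[0,1]` onto itself, with all
non-differentiability points `N`-adic.) -/
def InFN (N : ℕ) (f : ℝ → ℝ) : Prop :=
  f 0 = 0 ∧ f 1 = 1 ∧
    ∃ (n : ℕ) (a : ℕ → ℝ), 0 < n ∧ a 0 = 0 ∧ a n = 1 ∧
      (∀ i < n, a i < a (i + 1)) ∧
      (∀ i ≤ n, IsNAdic N (a i)) ∧
      (∀ i < n, ∃ q : ℤ, ∀ x ∈ Set.Icc (a i) (a (i + 1)),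
        f x = f (a i) + (N : ℝ) ^ q * (x - a i))

/-- A set `X ⊆ [0,1]` is `S_N`-saturated if for every `x ∈ X` and every `f ∈ F(N)`
differentiable at `x` with `f'(x) = 1`, one has `f(x) ∈ X`. -/
def SNSaturated (N : ℕ) (X : Set ℝ) : Prop :=
  ∀ x ∈ X, ∀ f : ℝ → ℝ, InFN N f → HasDerivAt f 1 x → f x ∈ X

/-!
Two explicit elements of `F(N)` act near the middle of `[0, 1]` as translations by
`±(N - 1) ε` for arbitrarily small `N`-adic `ε`, so a saturated set `X` is invariant under
these translations there. Hence `u ↦ λ(X ∩ B(u, r))`, which is Lipschitz, has arbitrarily small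
periods and is constant on `(r, 1 - r)`: the density of `X` at scale `r` is the same at every
point of `(0, 1)`. By Lebesgue's density theorem it tends to `1` at almost every point of `X` and
to `0` at almost every point outside `X`, so one of these two sets is null.
-/

open MeasureTheory Set Metric Filter Topology
open scoped NNReal

section

variable {N : ℕ}

theorem isNAdic_zero : IsNAdic N 0 := ⟨0, 0, by simp⟩

theorem isNAdic_one : IsNAdic N 1 := ⟨1, 0, by simp⟩

theorem IsNAdic.natCast_mul {x : ℝ} (hx : IsNAdic N x) : IsNAdic N (N * x) := by
  obtain ⟨k, m, rfl⟩ := hx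
  exact ⟨N * k, m, by push_cast; ring⟩

theorem IsNAdic.sub (hN : 0 < N) {x y : ℝ} (hx : IsNAdic N x) (hy : IsNAdic N y) :
    IsNAdic N (x - y) := by
  obtain ⟨k, m, rfl⟩ := hx
  obtain ⟨l, n, rfl⟩ := hy
  have : (N : ℝ) ≠ 0 := by positivity
  exact ⟨k * N ^ n - l * N ^ m, m + n, by push_cast; field_simp; ring⟩

theorem exists_isNAdic_pos_lt (hN : 1 < N) {θ : ℝ} (hθ : 0 < θ) :
    ∃ ε, IsNAdic N ε ∧ 0 < ε ∧ ε < θ := by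
  have hN' : (1 : ℝ) < N := by exact_mod_cast hN
  obtain ⟨m, hm⟩ := exists_pow_lt_of_lt_one hθ (inv_lt_one_of_one_lt₀ hN')
  exact ⟨((N : ℝ) ^ m)⁻¹, ⟨1, m, by simp⟩, by positivity, by rwa [← inv_pow]⟩

noncomputable def threePieceMap (N : ℕ) (p r : ℝ) (k₁ k₂ k₃ : ℤ) (b₂ b₃ : ℝ) (x : ℝ) : ℝ :=
  if x ≤ p then (N : ℝ) ^ k₁ * x else if x ≤ r then (N : ℝ) ^ k₂ * x + b₂ else (N : ℝ) ^ k₃ * x + b₃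

section threePieceMap

variable {p r b₂ b₃ : ℝ} {k₁ k₂ k₃ : ℤ}

theorem threePieceMap_eventuallyEq_add {x : ℝ} (hx : x ∈ Ioo p r) :
    threePieceMap N p r k₁ 0 k₃ b₂ b₃ =ᶠ[𝓝 x] fun y => y + b₂ := by
  filter_upwards [Ioo_mem_nhds hx.1 hx.2] with y hy
  simp [threePieceMap, not_le.2 hy.1, hy.2.le]

theorem inFN_threePieceMap (hp : 0 < p) (hpr : p < r) (hr : r < 1)
    (hpN : IsNAdic N p) (hrN : IsNAdic N r)
    (hp_cont : (N : ℝ) ^ k₁ * p = (N : ℝ) ^ k₂ * p + b₂)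
    (hr_cont : (N : ℝ) ^ k₂ * r + b₂ = (N : ℝ) ^ k₃ * r + b₃)
    (h_one : (N : ℝ) ^ k₃ + b₃ = 1) :
    InFN N (threePieceMap N p r k₁ k₂ k₃ b₂ b₃) := by
  set f := threePieceMap N p r k₁ k₂ k₃ b₂ b₃
  have left : ∀ x ≤ p, f x = (N : ℝ) ^ k₁ * x := fun x hx => if_pos hx
  have mid : ∀ x ∈ Icc p r, f x = (N : ℝ) ^ k₂ * x + b₂ := by
    rintro x ⟨hpx, hxr⟩
    simp only [f, threePieceMap, if_pos hxr]
    split_ifs with hxp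
    · rw [le_antisymm hxp hpx, hp_cont]
    · rfl
  have right : ∀ x ∈ Icc r 1, f x = (N : ℝ) ^ k₃ * x + b₃ := by
    rintro x ⟨hrx, -⟩
    simp only [f, threePieceMap, if_neg (not_le.2 (hpr.trans_le hrx))]
    split_ifs with hxr
    · rw [le_antisymm hxr hrx, hr_cont]
    · rfl
  refine ⟨by simp [left 0 hp.le], by simp [right 1 ⟨hr.le, le_rfl⟩, h_one],
    3, fun i => [0, p, r, 1].getD i 1, by norm_num, rfl, rfl, ?_, ?_, ?_⟩
  · intro i hi
    interval_cases i <;> simp [hp, hpr, hr]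
  · intro i hi
    interval_cases i <;> simp [isNAdic_zero, isNAdic_one, hpN, hrN]
  · intro i hi
    interval_cases i
    · exact ⟨k₁, fun x hx => by simp [left x hx.2, left 0 hp.le]⟩
    · refine ⟨k₂, fun x hx => ?_⟩
      simp only [List.getD_cons_succ, List.getD_cons_zero] at hx ⊢
      rw [mid x hx, mid p ⟨le_rfl, hpr.le⟩]; ring
    · refine ⟨k₃, fun x hx => ?_⟩
      simp only [List.getD_cons_succ, List.getD_cons_zero] at hx ⊢
      rw [right x hx, right r ⟨le_rfl, hr.le⟩]; ring

end threePieceMap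

theorem eq_of_forall_small_period {g : ℝ → ℝ} {K : ℝ≥0} (hg : LipschitzWith K g) {a b : ℝ}
    (hab : a ≤ b) (hper : ∀ η > 0, ∃ δ > 0, δ ≤ η ∧ ∀ x ∈ Icc a (b - δ), g (x + δ) = g x) :
    g a = g b := by
  refine eq_of_forall_dist_le fun η hη => ?_
  obtain ⟨δ, hδ, hδη, hδg⟩ := hper (η / (K + 1)) (by positivity)
  set k := ⌊(b - a) / δ⌋₊
  have hk_le : k * δ ≤ b - a := (le_div_iff₀ hδ).1 (Nat.floor_le (by positivity))
  have hk_lt : b - a < (k + 1) * δ := (div_lt_iff₀ hδ).1 (Nat.lt_floor_add_one _)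
  have hchain : ∀ j ≤ k, g (a + j * δ) = g a := by
    intro j hj
    induction j with
    | zero => simp
    | succ j ih =>
      have hjk : ((j + 1 : ℕ) : ℝ) ≤ k := by exact_mod_cast hj
      push_cast at hjk ⊢
      rw [← ih (by omega), ← hδg (a + j * δ) ⟨le_add_of_nonneg_right (by positivity), by nlinarith⟩]
      ring_nf
  calc dist (g a) (g b) = dist (g (a + k * δ)) (g b) := by rw [hchain k le_rfl]
    _ ≤ K * dist (a + k * δ) b := hg.dist_le_mul _ _
    _ ≤ K * (η / (K + 1)) := by
        gcongr
        rw [Real.dist_eq, abs_le]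
        constructor <;> nlinarith
    _ ≤ η := by
        rw [mul_div_assoc']
        exact div_le_of_le_mul₀ (by positivity) hη.le (by nlinarith)

theorem volume_inter_closedBall_add_eq {X : Set ℝ} {lo hi δ u r : ℝ}
    (hX : ∀ x ∈ Ioo lo hi, x + δ ∈ X ↔ x ∈ X) (hu : closedBall u r ⊆ Ioo lo hi) :
    volume (X ∩ closedBall (u + δ) r) = volume (X ∩ closedBall u r) := by
  rw [← measure_preimage_add volume δ, preimage_inter, preimage_add_closedBall, add_sub_cancel_right]
  congr 1
  ext x
  simp only [mem_inter_iff, mem_preimage, add_comm δ]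
  exact ⟨fun h => ⟨(hX x (hu h.2)).1 h.1, h.2⟩, fun h => ⟨(hX x (hu h.2)).2 h.1, h.2⟩⟩

theorem lipschitzWith_volume_inter_closedBall (X : Set ℝ) (r : ℝ) :
    LipschitzWith 2 fun u => (volume (X ∩ closedBall u r)).toReal := by
  refine LipschitzWith.of_le_add_mul 2 fun u v => ?_
  have hcover : X ∩ closedBall u r ⊆
      (X ∩ closedBall v r) ∪ uIcc (u - r) (v - r) ∪ uIcc (u + r) (v + r) := by
    rintro x ⟨hxX, hx⟩
    rw [Real.closedBall_eq_Icc] at hx ⊢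
    by_cases hv : x ∈ Icc (v - r) (v + r)
    · exact Or.inl (Or.inl ⟨hxX, hv⟩)
    · simp only [mem_Icc, not_and_or, not_le] at hv hx
      rcases hv with hv | hv
      · exact Or.inl (Or.inr (mem_uIcc.2 (Or.inl ⟨hx.1, hv.le⟩)))
      · exact Or.inr (mem_uIcc.2 (Or.inr ⟨hv.le, hx.2⟩))
  have hfin : volume (X ∩ closedBall v r) ≠ ⊤ :=
    ((measure_mono inter_subset_right).trans_lt measure_closedBall_lt_top).ne
  have hle : volume (X ∩ closedBall u r) ≤ volume (X ∩ closedBall v r) +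
      ENNReal.ofReal |v - r - (u - r)| + ENNReal.ofReal |v + r - (u + r)| := by
    rw [← Real.volume_interval, ← Real.volume_interval]
    exact (measure_mono hcover).trans
      ((measure_union_le _ _).trans (add_le_add_left (measure_union_le _ _) _))
  have hle_real := ENNReal.toReal_mono (by finiteness) hle
  rw [ENNReal.toReal_add (by finiteness) (by finiteness), ENNReal.toReal_add hfin (by finiteness),
    ENNReal.toReal_ofReal (abs_nonneg _), ENNReal.toReal_ofReal (abs_nonneg _)] at hle_real
  rw [Real.dist_eq]
  have h1 : |v - r - (u - r)| = |u - v| := by rw [abs_sub_comm]; ring_nf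
  have h2 : |v + r - (u + r)| = |u - v| := by rw [abs_sub_comm]; ring_nf
  push_cast
  linarith

section Saturated

variable {X : Set ℝ}

theorem SNSaturated.add_mem (hX : SNSaturated N X) {f : ℝ → ℝ} (hf : InFN N f) {x c : ℝ}
    (hfx : f =ᶠ[𝓝 x] fun y => y + c) (hx : x ∈ X) : x + c ∈ X := by
  have hderiv : HasDerivAt f 1 x := ((hasDerivAt_id x).add_const c).congr_of_eventuallyEq hfx
  simpa [hfx.eq_of_nhds] using hX x hx f hf hderiv

/-- The maps with slopes `N, 1, N⁻¹` and `N⁻¹, 1, N` are translations by `±(N - 1) ε` on the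
middle intervals `(ε, 1 - N ε)` and `(N ε, 1 - ε)`, which they exchange. -/
theorem SNSaturated.add_mem_iff (hX : SNSaturated N X) (hN : 0 < N) {ε : ℝ}
    (hεN : IsNAdic N ε) (hε : 0 < ε) (hε1 : (N + 1) * ε < 1) {x : ℝ}
    (hx : x ∈ Ioo ε (1 - N * ε)) : x + (N - 1) * ε ∈ X ↔ x ∈ X := by
  have hNε : 0 < (N : ℝ) * ε := by positivity
  constructor
  · intro h
    have hmem : x + (N - 1) * ε ∈ Ioo (N * ε) (1 - ε) := ⟨by linarith [hx.1], by linarith [hx.2]⟩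
    have hf : InFN N (threePieceMap N (N * ε) (1 - ε) (-1) 0 1 (-((N - 1) * ε)) (1 - N)) :=
      inFN_threePieceMap hNε (by linarith) (by linarith) hεN.natCast_mul (isNAdic_one.sub hN hεN)
        (by field_simp; ring) (by simp; ring) (by simp)
    have := hX.add_mem hf (threePieceMap_eventuallyEq_add hmem) h
    rwa [add_neg_cancel_right] at this
  · intro h
    have hf : InFN N (threePieceMap N ε (1 - N * ε) 1 0 (-1) ((N - 1) * ε) (1 - (N : ℝ)⁻¹)) :=
      inFN_threePieceMap hε (by linarith) (by linarith) hεN (isNAdic_one.sub hN hεN.natCast_mul)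
        (by simp; ring) (by field_simp; ring) (by simp)
    exact hX.add_mem hf (threePieceMap_eventuallyEq_add hx) h

theorem SNSaturated.volume_inter_closedBall_eq (hX : SNSaturated N X) (hN : 1 < N)
    {x y r : ℝ} (hx : r < x) (hx' : x + r < 1) (hy : r < y) (hy' : y + r < 1) :
    volume (X ∩ closedBall x r) = volume (X ∩ closedBall y r) := by
  wlog hxy : x ≤ y generalizing x y
  · exact (this hy hy' hx hx' (le_of_not_ge hxy)).symm
  have hfin : ∀ u, volume (X ∩ closedBall u r) ≠ ⊤ := fun u =>
    ((measure_mono inter_subset_right).trans_lt measure_closedBall_lt_top).ne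
  rw [← ENNReal.toReal_eq_toReal_iff' (hfin x) (hfin y)]
  refine eq_of_forall_small_period (lipschitzWith_volume_inter_closedBall X r) hxy fun η hη => ?_
  have hN' : (1 : ℝ) < N := by exact_mod_cast hN
  -- `ε` small enough that the balls stay in `(ε, 1 - N ε)` and the period `(N - 1) ε` is `≤ η`
  obtain ⟨ε, hεN, hε, hεθ⟩ := exists_isNAdic_pos_lt hN
    (θ := min (min (x - r) (1 - r - y)) (min η 1 / (N + 1))) (by
      simp only [lt_min_iff]
      exact ⟨⟨by linarith, by linarith⟩, by positivity⟩)
  simp only [lt_min_iff, lt_div_iff₀ (by positivity : (0 : ℝ) < N + 1)] at hεθ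
  obtain ⟨⟨hεx, hεy⟩, hεη, hε1⟩ := hεθ
  refine ⟨(N - 1) * ε, by nlinarith, by nlinarith, fun u hu => ?_⟩
  have hball : closedBall u r ⊆ Ioo ε (1 - N * ε) := by
    rw [Real.closedBall_eq_Icc]
    exact Icc_subset_Ioo (by linarith [hu.1]) (by nlinarith [hu.2])
  rw [volume_inter_closedBall_add_eq
    (fun z hz => hX.add_mem_iff (by omega) hεN hε (by linarith) hz) hball]

end Saturated

theorem volume_inter_Ioo_zero_one {X : Set ℝ} (hX : X ⊆ Icc 0 1) :
    volume (X ∩ Ioo 0 1) = volume X := by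
  rw [measure_congr ((ae_eq_refl X).inter Ioo_ae_eq_Icc), inter_eq_left.2 hX]

end

/-- The relation `S_N` is ergodic for Lebesgue measure: every Borel
`S_N`-saturated subset of `[0,1]` has measure `0` or `1`. -/
theorem statement10 (N : ℕ) (hN : 2 ≤ N) (X : Set ℝ) (hX : X ⊆ Set.Icc (0 : ℝ) 1)
    (hXmeas : MeasurableSet X) (hXsat : SNSaturated N X) :
    MeasureTheory.volume X = 0 ∨ MeasureTheory.volume X = 1 := by
  by_contra hne
  obtain ⟨h0, h1⟩ := not_or.1 hne
  have hdens := Besicovitch.ae_tendsto_measure_inter_div_of_measurableSet volume hXmeas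
  obtain ⟨x, ⟨hxX, hx0, hx1⟩, hx⟩ := Measure.exists_mem_of_measure_ne_zero_of_ae
    (by rwa [volume_inter_Ioo_zero_one hX]) (ae_restrict_of_ae hdens)
  obtain ⟨y, ⟨⟨hy0, hy1⟩, hyX⟩, hy⟩ := Measure.exists_mem_of_measure_ne_zero_of_ae (s := Ioo 0 1 \ X)
    (fun h => h1 (by
      rw [← volume_inter_Ioo_zero_one hX, inter_comm, ← add_zero (volume _), ← h,
        measure_inter_add_sdiff _ hXmeas, Real.volume_Ioo, sub_zero, ENNReal.ofReal_one]))
    (ae_restrict_of_ae hdens)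
  have heq : (fun r => volume (X ∩ closedBall x r) / volume (closedBall x r)) =ᶠ[𝓝[>] 0]
      (fun r => volume (X ∩ closedBall y r) / volume (closedBall y r)) := by
    filter_upwards [Ioo_mem_nhdsGT (show (0 : ℝ) < min (min x (1 - x)) (min y (1 - y)) by
      simp only [lt_min_iff]; exact ⟨⟨hx0, by linarith⟩, hy0, by linarith⟩)] with r hr
    simp only [mem_Ioo, lt_min_iff] at hr
    rw [hXsat.volume_inter_closedBall_eq (by omega) (x := x) (y := y) (by linarith)
      (by linarith) (by linarith) (by linarith), Real.volume_closedBall, Real.volume_closedBall]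
  rw [indicator_of_mem hxX] at hx
  rw [indicator_of_notMem hyX] at hy
  exact one_ne_zero (tendsto_nhds_unique (hx.congr' heq) hy)
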